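/- arXiv:1008.3726 — 11 statements merged into one kernel-verified Lean document; each statement's English description precedes it below -/
import Mathlib

section
/- Let a < b be reals and α, β ∈ ℝ such that the characteristic equation λ² + αλ + β = 0 has two distinct positive real roots λ₁, λ₂. Then for every ε > 0 and every twice continuously differentiable function y : [a,b] → ℝ satisfying |y''(t) + α y'(t) + β y(t)| ≤ ε for all t ∈ [a,b], there exists a constant K > 0 (depending only on a, b, λ₁, λ₂) and a twice continuously differentiable function u : [a,b] → ℝ with u''(t) + α u'(t) + β u(t) = 0 for all t ∈ [a,b] and |y(t) − u(t)| ≤ K ε for all t ∈ [a,b]. -/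
/-!
Variation of parameters. Extend the defect g = y'' + α y' + β y continuously from [a, b] to ℝ,
so that two-sided derivatives exist at the endpoints. For each root l,
E_l(t) = e^{l t} ∫_a^t e^{-l s} g(s) ds solves x' = l x + g, so
w = (E_{l₁} - E_{l₂}) / (l₁ - l₂) solves w'' - (l₁ + l₂) w' + l₁ l₂ w = g.
Writing E_l(t) = ∫_a^t e^{l (t - s)} g(s) ds gives |E_l| ≤ (b - a) e^{|l| (b - a)} ε on [a, b],
so u = y - w is an exact solution within K ε of y.
-/

open Set Real

theorem ContinuousOn.exists_continuous_eqOn_Icc {g : ℝ → ℝ} {a b : ℝ} (hab : a ≤ b)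
    (hg : ContinuousOn g (Icc a b)) : ∃ G : ℝ → ℝ, Continuous G ∧ EqOn G g (Icc a b) :=
  ⟨IccExtend hab ((Icc a b).domRestrict g), hg.domRestrict.Icc_extend',
    fun _ ht ↦ IccExtend_of_mem _ _ ht⟩

noncomputable def duhamel (a l : ℝ) (G : ℝ → ℝ) (t : ℝ) : ℝ :=
  exp (l * t) * ∫ s in a..t, exp (-(l * s)) * G s

section Duhamel

variable {a l : ℝ} {G : ℝ → ℝ}

theorem hasDerivAt_duhamel (hG : Continuous G) (t : ℝ) :
    HasDerivAt (duhamel a l G) (l * duhamel a l G t + G t) t := by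
  have hexp : HasDerivAt (fun s ↦ exp (l * s)) (exp (l * t) * l) t :=
    ((hasDerivAt_id t).const_mul l).exp.congr_deriv (by simp)
  have hint := ((by fun_prop : Continuous fun s ↦ exp (-(l * s)) * G s).integral_hasStrictDerivAt
    a t).hasDerivAt
  refine (hexp.mul hint).congr_deriv ?_
  rw [duhamel, ← mul_assoc, ← exp_add, add_neg_cancel, exp_zero, one_mul]
  ring

theorem continuous_duhamel (hG : Continuous G) : Continuous (duhamel a l G) :=
  continuous_iff_continuousAt.2 fun t ↦ (hasDerivAt_duhamel hG t).continuousAt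

theorem duhamel_eq_integral (t : ℝ) :
    duhamel a l G t = ∫ s in a..t, exp (l * (t - s)) * G s := by
  rw [duhamel, ← intervalIntegral.integral_const_mul]
  congr 1 with s
  rw [← mul_assoc, ← exp_add]
  ring_nf

theorem abs_duhamel_le {b ε : ℝ} (hG : ∀ s ∈ Icc a b, |G s| ≤ ε) {t : ℝ} (ht : t ∈ Icc a b) :
    |duhamel a l G t| ≤ (b - a) * exp (|l| * (b - a)) * ε := by
  rw [duhamel_eq_integral, ← Real.norm_eq_abs]
  have hbound : ∀ s ∈ uIoc a t, ‖exp (l * (t - s)) * G s‖ ≤ exp (|l| * (b - a)) * ε := by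
    intro s hs
    rw [uIoc_of_le ht.1] at hs
    have hs' : s ∈ Icc a b := ⟨hs.1.le, hs.2.trans ht.2⟩
    have hexp : exp (l * (t - s)) ≤ exp (|l| * (b - a)) := by
      refine exp_le_exp.2 (mul_le_mul (le_abs_self l) ?_ ?_ (abs_nonneg l)) <;>
        linarith [hs.1, hs.2, ht.2]
    rw [norm_mul, Real.norm_of_nonneg (exp_pos _).le, Real.norm_eq_abs]
    exact mul_le_mul hexp (hG s hs') (abs_nonneg _) (exp_pos _).le
  calc ‖∫ s in a..t, exp (l * (t - s)) * G s‖ ≤ exp (|l| * (b - a)) * ε * |t - a| :=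
        intervalIntegral.norm_integral_le_of_norm_le_const hbound
    _ ≤ exp (|l| * (b - a)) * ε * (b - a) := by
        have hε : 0 ≤ ε := (abs_nonneg _).trans (hG t ht)
        gcongr
        rw [abs_of_nonneg (by linarith [ht.1])]
        linarith [ht.2]
    _ = (b - a) * exp (|l| * (b - a)) * ε := by ring

end Duhamel

theorem abs_div_sub_le {x₁ x₂ c₁ c₂ l₁ l₂ : ℝ} (h₁ : |x₁| ≤ c₁) (h₂ : |x₂| ≤ c₂) :
    |(x₁ - x₂) / (l₁ - l₂)| ≤ (c₁ + c₂) / |l₁ - l₂| := by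
  rw [abs_div]
  gcongr
  exact (abs_sub _ _).trans (add_le_add h₁ h₂)

theorem exists_solution_of_forcing {a b ε l₁ l₂ : ℝ} {G : ℝ → ℝ} (hne : l₁ ≠ l₂)
    (hG : Continuous G) (hGb : ∀ s ∈ Icc a b, |G s| ≤ ε) :
    ∃ w w' w'' : ℝ → ℝ, (∀ t, HasDerivAt w (w' t) t) ∧ (∀ t, HasDerivAt w' (w'' t) t) ∧
      Continuous w'' ∧ (∀ t, w'' t - (l₁ + l₂) * w' t + l₁ * l₂ * w t = G t) ∧
      ∀ t ∈ Icc a b,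
        |w t| ≤ (b - a) * (exp (|l₁| * (b - a)) + exp (|l₂| * (b - a))) / |l₁ - l₂| * ε := by
  set E₁ := duhamel a l₁ G
  set E₂ := duhamel a l₂ G
  have hE₁ : Continuous E₁ := continuous_duhamel hG
  have hE₂ : Continuous E₂ := continuous_duhamel hG
  refine ⟨fun t ↦ (E₁ t - E₂ t) / (l₁ - l₂), fun t ↦ (l₁ * E₁ t - l₂ * E₂ t) / (l₁ - l₂),
    fun t ↦ (l₁ ^ 2 * E₁ t - l₂ ^ 2 * E₂ t) / (l₁ - l₂) + G t, fun t ↦ ?_, fun t ↦ ?_,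
    by fun_prop, fun t ↦ ?_, fun t ht ↦ ?_⟩
  · refine (((hasDerivAt_duhamel hG t).sub (hasDerivAt_duhamel hG t)).div_const _).congr_deriv ?_
    ring
  · refine ((((hasDerivAt_duhamel hG t).const_mul l₁).sub
      ((hasDerivAt_duhamel hG t).const_mul l₂)).div_const _).congr_deriv ?_
    field_simp
    ring
  · field_simp
    ring
  · calc |(E₁ t - E₂ t) / (l₁ - l₂)|
        ≤ ((b - a) * exp (|l₁| * (b - a)) * ε + (b - a) * exp (|l₂| * (b - a)) * ε) / |l₁ - l₂| :=
          abs_div_sub_le (abs_duhamel_le hGb ht) (abs_duhamel_le hGb ht)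
      _ = _ := by ring

theorem stmt_0_general (a b α β l1 l2 : ℝ) (hab : a < b)
    (hne : l1 ≠ l2)
    (hchar : ∀ l : ℝ, l ^ 2 + α * l + β = (l - l1) * (l - l2)) :
    ∃ K > 0, ∀ ε > 0, ∀ y y' y'' : ℝ → ℝ,
      (∀ t ∈ Icc a b, HasDerivAt y (y' t) t) →
      (∀ t ∈ Icc a b, HasDerivAt y' (y'' t) t) →
      ContinuousOn y'' (Icc a b) →
      (∀ t ∈ Icc a b, |y'' t + α * y' t + β * y t| ≤ ε) →
      ∃ u u' u'' : ℝ → ℝ,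
        (∀ t ∈ Icc a b, HasDerivAt u (u' t) t) ∧
        (∀ t ∈ Icc a b, HasDerivAt u' (u'' t) t) ∧
        ContinuousOn u'' (Icc a b) ∧
        (∀ t ∈ Icc a b, u'' t + α * u' t + β * u t = 0) ∧
        (∀ t ∈ Icc a b, |y t - u t| ≤ K * ε) := by
  have hβ : β = l1 * l2 := by linarith [hchar 0]
  have hα : α = -(l1 + l2) := by linarith [hchar 1]
  refine ⟨(b - a) * (exp (|l1| * (b - a)) + exp (|l2| * (b - a))) / |l1 - l2|,
    by have := sub_pos.2 hab; positivity, fun ε _ y y' y'' hy hy' hy'' hyε ↦ ?_⟩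
  have hg : ContinuousOn (fun t ↦ y'' t + α * y' t + β * y t) (Icc a b) := by
    have hy₀ : ContinuousOn y (Icc a b) := fun t ht ↦ (hy t ht).continuousAt.continuousWithinAt
    have hy₁ : ContinuousOn y' (Icc a b) := fun t ht ↦ (hy' t ht).continuousAt.continuousWithinAt
    fun_prop
  obtain ⟨G, hG, hGg⟩ := hg.exists_continuous_eqOn_Icc hab.le
  obtain ⟨w, w', w'', hw, hw', hw'', hwG, hwε⟩ :=
    exists_solution_of_forcing hne hG fun s hs ↦ by rw [hGg hs]; exact hyε s hs
  refine ⟨y - w, y' - w', y'' - w'', fun t ht ↦ (hy t ht).sub (hw t),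
    fun t ht ↦ (hy' t ht).sub (hw' t), hy''.sub hw''.continuousOn, fun t ht ↦ ?_, fun t ht ↦ ?_⟩
  · have hwt := hwG t
    rw [hGg ht] at hwt
    simp only [Pi.sub_apply, hα, hβ] at hwt ⊢
    linear_combination -hwt
  · simpa using hwε t ht

theorem stmt_0 (a b α β l1 l2 : ℝ) (hab : a < b)
    (h1 : 0 < l1) (h2 : 0 < l2) (hne : l1 ≠ l2)
    (hchar : ∀ l : ℝ, l ^ 2 + α * l + β = (l - l1) * (l - l2)) :
    ∃ K > 0, ∀ ε > 0, ∀ y y' y'' : ℝ → ℝ,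
      (∀ t ∈ Icc a b, HasDerivAt y (y' t) t) →
      (∀ t ∈ Icc a b, HasDerivAt y' (y'' t) t) →
      ContinuousOn y'' (Icc a b) →
      (∀ t ∈ Icc a b, |y'' t + α * y' t + β * y t| ≤ ε) →
      ∃ u u' u'' : ℝ → ℝ,
        (∀ t ∈ Icc a b, HasDerivAt u (u' t) t) ∧
        (∀ t ∈ Icc a b, HasDerivAt u' (u'' t) t) ∧
        ContinuousOn u'' (Icc a b) ∧
        (∀ t ∈ Icc a b, u'' t + α * u' t + β * u t = 0) ∧
        (∀ t ∈ Icc a b, |y t - u t| ≤ K * ε) :=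
  stmt_0_general a b α β l1 l2 hab hne hchar
end

section
/- Let a < b be integers and α, β ∈ ℝ such that λ² + αλ + β = 0 has two distinct positive real roots. Then there exists K > 0 such that for every ε > 0 and every sequence y : ℤ → ℝ satisfying |Δ²y(t) + α Δy(t) + β y(t)| ≤ ε for all integers t ∈ [a, b−2], where Δy(t) = y(t+1) − y(t) and Δ²y(t) = y(t+2) − 2y(t+1) + y(t), there exists a sequence u : ℤ → ℝ with Δ²u(t) + α Δu(t) + β u(t) = 0 for all t ∈ [a, b−2] and |y(t) − u(t)| ≤ K ε for all t ∈ [a, b]. -/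
open Set

private def Mseq (c1 c2 : ℝ) : ℕ → ℝ
  | 0 => 0
  | 1 => 0
  | (n+2) => c1 * Mseq c1 c2 (n+1) + c2 * Mseq c1 c2 n + 1

private noncomputable def Vseq (p q y0 y1 : ℝ) : ℕ → ℝ
  | 0 => y0
  | 1 => y1
  | (n+2) => p * Vseq p q y0 y1 (n+1) + q * Vseq p q y0 y1 n

private lemma Mseq_nonneg (c1 c2 : ℝ) (h1 : 0 ≤ c1) (h2 : 0 ≤ c2) :
    ∀ n, 0 ≤ Mseq c1 c2 n
  | 0 => le_refl 0
  | 1 => le_refl 0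
  | (n+2) => by
    have ha := Mseq_nonneg c1 c2 h1 h2 n
    have hb := Mseq_nonneg c1 c2 h1 h2 (n+1)
    have := mul_nonneg h1 hb
    have := mul_nonneg h2 ha
    simp only [Mseq]
    linarith

private lemma Mseq_mono_succ (c1 c2 : ℝ) (h1 : 0 ≤ c1) (h2 : 0 ≤ c2) :
    ∀ n, Mseq c1 c2 n ≤ Mseq c1 c2 (n+1)
  | 0 => le_refl 0
  | 1 => by simp only [Mseq]; nlinarith
  | (n+2) => by
    have ha := Mseq_mono_succ c1 c2 h1 h2 n
    have hb := Mseq_mono_succ c1 c2 h1 h2 (n+1)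
    have := mul_le_mul_of_nonneg_left hb h1
    have := mul_le_mul_of_nonneg_left ha h2
    show Mseq c1 c2 (n+2) ≤ Mseq c1 c2 (n+3)
    simp only [Mseq] at *
    linarith

private lemma Mseq_mono (c1 c2 : ℝ) (h1 : 0 ≤ c1) (h2 : 0 ≤ c2) :
    Monotone (Mseq c1 c2) :=
  monotone_nat_of_le_succ (Mseq_mono_succ c1 c2 h1 h2)

theorem stmt_1 (a b : ℤ) (α β l1 l2 : ℝ) (hab : a < b)
    (h1 : 0 < l1) (h2 : 0 < l2) (hne : l1 ≠ l2)
    (hchar : ∀ l : ℝ, l ^ 2 + α * l + β = (l - l1) * (l - l2)) :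
    ∃ K > 0, ∀ ε > 0, ∀ y : ℤ → ℝ,
      (∀ t ∈ Icc a (b - 2),
        |(y (t + 2) - 2 * y (t + 1) + y t) + α * (y (t + 1) - y t) + β * y t| ≤ ε) →
      ∃ u : ℤ → ℝ,
        (∀ t ∈ Icc a (b - 2),
          (u (t + 2) - 2 * u (t + 1) + u t) + α * (u (t + 1) - u t) + β * u t = 0) ∧
        (∀ t ∈ Icc a b, |y t - u t| ≤ K * ε) := by
  classical
  set c1 : ℝ := |2 - α| with hc1def
  set c2 : ℝ := |α - β - 1| with hc2def
  have hc1 : 0 ≤ c1 := abs_nonneg _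
  have hc2 : 0 ≤ c2 := abs_nonneg _
  set N : ℕ := (b - a).toNat with hNdef
  refine ⟨Mseq c1 c2 N + 1, by have := Mseq_nonneg c1 c2 hc1 hc2 N; linarith, ?_⟩
  intro ε hε y hy
  set p : ℝ := 2 - α with hpdef
  set q : ℝ := α - β - 1 with hqdef
  set u : ℤ → ℝ := fun t => Vseq p q (y a) (y (a+1)) (t - a).toNat with hudef
  have hu : ∀ m : ℕ, u (a + m) = Vseq p q (y a) (y (a+1)) m := by
    intro m
    simp only [hudef]
    congr 1
    omega
  have key : ∀ n : ℕ, a + n ≤ b → |y (a + n) - u (a + n)| ≤ Mseq c1 c2 n * ε := by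
    intro n
    induction n using Nat.strong_induction_on with
    | _ n ih =>
      match n with
      | 0 => intro _; rw [hu 0]; simp [Vseq, Mseq]
      | 1 =>
        intro _
        rw [hu 1]
        simp only [Vseq, Mseq]
        push_cast
        simp
      | (n+2) =>
        intro hle
        have hle1 : a + (n + 1 : ℕ) ≤ b := by push_cast at hle ⊢; omega
        have hle0 : a + (n : ℕ) ≤ b := by push_cast at hle ⊢; omega
        have e1 := ih (n+1) (by omega) hle1
        have e0 := ih n (by omega) hle0
        have hmem : (a + n : ℤ) ∈ Icc a (b - 2) := by
          constructor <;> push_cast at hle ⊢ <;> omega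
        have hd := hy (a + n) hmem
        have harg2 : (a + ((n:ℤ)+2)) = (a + n) + 2 := by ring
        have harg1 : (a + ((n:ℤ)+1)) = (a + n) + 1 := by ring
        have hv2 := hu (n+2)
        have hv1 := hu (n+1)
        have hv0 := hu n
        push_cast at hv2 hv1 ⊢
        rw [harg2]
        rw [harg2] at hv2
        rw [harg1] at hv1
        -- u recurrence
        have hurec : u (a + n + 2) = p * u (a + n + 1) + q * u (a + n) := by
          rw [hv2, hv1, hv0]; rfl
        set D : ℝ := (y ((a+n) + 2) - 2 * y ((a+n) + 1) + y (a+n)) +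
            α * (y ((a+n) + 1) - y (a+n)) + β * y (a+n) with hDdef
        have hyrec : y (a + n + 2) = p * y (a + n + 1) + q * y (a + n) + D := by
          rw [hDdef, hpdef, hqdef]; ring
        have hdiff : y (a + n + 2) - u (a + n + 2) =
            p * (y (a + n + 1) - u (a + n + 1)) + q * (y (a + n) - u (a + n)) + D := by
          rw [hyrec, hurec]; ring
        rw [hdiff]
        calc |p * (y (a + n + 1) - u (a + n + 1)) + q * (y (a + n) - u (a + n)) + D|
            ≤ |p| * |y (a + n + 1) - u (a + n + 1)| + |q| * |y (a + n) - u (a + n)| + |D| := by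
              calc _ ≤ |p * (y (a + n + 1) - u (a + n + 1)) + q * (y (a + n) - u (a + n))| + |D| :=
                    abs_add_le _ _
                _ ≤ _ := by
                    gcongr
                    calc _ ≤ |p * (y (a + n + 1) - u (a + n + 1))| + |q * (y (a + n) - u (a + n))| :=
                          abs_add_le _ _
                      _ = _ := by rw [abs_mul, abs_mul]
          _ ≤ c1 * (Mseq c1 c2 (n+1) * ε) + c2 * (Mseq c1 c2 n * ε) + ε := by
              push_cast at e1 e0
              rw [harg1] at e1
              gcongr <;> first | exact e1 | exact e0 | exact hd
          _ = Mseq c1 c2 (n+2) * ε := by simp only [Mseq]; ring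
  refine ⟨u, ?_, ?_⟩
  · intro t ht
    obtain ⟨ht1, ht2⟩ := ht
    obtain ⟨n, hn⟩ : ∃ n : ℕ, t = a + n := ⟨(t - a).toNat, by omega⟩
    have hv2 := hu (n+2)
    have hv1 := hu (n+1)
    have hv0 := hu n
    push_cast at hv2 hv1
    have harg2 : (a + ((n:ℤ)+2)) = (a + n) + 2 := by ring
    have harg1 : (a + ((n:ℤ)+1)) = (a + n) + 1 := by ring
    rw [harg2] at hv2; rw [harg1] at hv1
    subst hn
    rw [hv2, hv1, hv0]
    simp only [Vseq]
    rw [hpdef, hqdef]; ring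
  · intro t ht
    obtain ⟨ht1, ht2⟩ := ht
    obtain ⟨n, hn, hnN⟩ : ∃ n : ℕ, t = a + n ∧ n ≤ N := ⟨(t - a).toNat, by omega, by omega⟩
    subst hn
    calc |y (a + n) - u (a + n)| ≤ Mseq c1 c2 n * ε := key n ht2
      _ ≤ (Mseq c1 c2 N + 1) * ε := by
          have := Mseq_mono c1 c2 hc1 hc2 hnN
          nlinarith
end

section
/- Let λ₂ > 0 and a < b reals, ε > 0. Suppose g : [a,b] → ℝ is continuously differentiable and |g'(t) − λ₂ g(t)| ≤ ε for all t ∈ [a,b]. Then there exists c ∈ ℝ such that the function z(t) := c·e^{λ₂ t} satisfies z'(t) = λ₂ z(t) and |g(t) − z(t)| ≤ ε/λ₂ for all t ∈ [a,b]. -/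
open Set

theorem stmt_2 (l2 a b ε : ℝ) (hl : 0 < l2) (hab : a < b) (hε : 0 < ε)
    (g g' : ℝ → ℝ)
    (hg : ∀ t ∈ Icc a b, HasDerivAt g (g' t) t)
    (hg' : ContinuousOn g' (Icc a b))
    (happ : ∀ t ∈ Icc a b, |g' t - l2 * g t| ≤ ε) :
    ∃ c : ℝ,
      (∀ t : ℝ, HasDerivAt (fun s => c * Real.exp (l2 * s))
        (l2 * (c * Real.exp (l2 * t))) t) ∧
      (∀ t ∈ Icc a b, |g t - c * Real.exp (l2 * t)| ≤ ε / l2) := by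
  set c := g b * Real.exp (-(l2 * b)) with hc
  refine ⟨c, ?_, ?_⟩
  · intro t
    have h1 : HasDerivAt (fun s => l2 * s) l2 t := by
      simpa using (hasDerivAt_id t).const_mul l2
    have h3 := ((Real.hasDerivAt_exp (l2 * t)).comp t h1).const_mul c
    refine h3.congr_deriv ?_
    ring
  · intro t ht
    have htb : t ≤ b := ht.2
    have hsub : Icc t b ⊆ Icc a b := Icc_subset_Icc ht.1 le_rfl
    set h : ℝ → ℝ := fun s => g s * Real.exp (-(l2 * s)) with hh
    have hderiv : ∀ s ∈ Icc a b,
        HasDerivAt h ((g' s - l2 * g s) * Real.exp (-(l2 * s))) s := by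
      intro s hs
      have e0 : HasDerivAt (fun u : ℝ => -(l2 * u)) (-l2) s := by
        exact ((hasDerivAt_id s).const_mul l2).neg.congr_deriv (by simp)
      have e1 := (Real.hasDerivAt_exp (-(l2 * s))).comp s e0
      have := (hg s hs).mul e1
      refine this.congr_deriv ?_
      simp only [Function.comp]
      ring
    have hcontg : ContinuousOn g (Icc a b) := fun s hs =>
      (hg s hs).continuousAt.continuousWithinAt
    have hcexp : Continuous fun s : ℝ => Real.exp (-(l2 * s)) := by
      fun_prop
    have hcont : ContinuousOn (fun s => (g' s - l2 * g s) * Real.exp (-(l2 * s)))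
        (Icc t b) :=
      (((hg'.mono hsub).sub (continuousOn_const.mul (hcontg.mono hsub))).mul
        hcexp.continuousOn)
    have hFTC : ∫ s in t..b, (g' s - l2 * g s) * Real.exp (-(l2 * s)) = h b - h t := by
      apply intervalIntegral.integral_eq_sub_of_hasDerivAt
      · intro s hs
        rw [uIcc_of_le htb] at hs
        exact hderiv s (hsub hs)
      · exact (hcont.mono (by rw [uIcc_of_le htb])).intervalIntegrable
    have hint1 : IntervalIntegrable
        (fun s => |(g' s - l2 * g s) * Real.exp (-(l2 * s))|) MeasureTheory.volume t b :=
      ((hcont.mono (by rw [uIcc_of_le htb])).abs).intervalIntegrable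
    have hint2 : IntervalIntegrable (fun s => ε * Real.exp (-(l2 * s)))
        MeasureTheory.volume t b :=
      (continuous_const.mul hcexp).intervalIntegrable t b
    have hptw : ∀ s ∈ Icc t b,
        |(g' s - l2 * g s) * Real.exp (-(l2 * s))| ≤ ε * Real.exp (-(l2 * s)) := by
      intro s hs
      rw [abs_mul, abs_of_pos (Real.exp_pos _)]
      exact mul_le_mul_of_nonneg_right (happ s (hsub hs)) (Real.exp_pos _).le
    have hintval : ∫ s in t..b, ε * Real.exp (-(l2 * s))
        = ε / l2 * (Real.exp (-(l2 * t)) - Real.exp (-(l2 * b))) := by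
      have hF : ∀ s ∈ uIcc t b, HasDerivAt (fun u => -(ε / l2) * Real.exp (-(l2 * u)))
          (ε * Real.exp (-(l2 * s))) s := by
        intro s _
        have e0 : HasDerivAt (fun u : ℝ => -(l2 * u)) (-l2) s := by
          exact ((hasDerivAt_id s).const_mul l2).neg.congr_deriv (by simp)
        have e1 := ((Real.hasDerivAt_exp (-(l2 * s))).comp s e0).const_mul (-(ε / l2))
        refine e1.congr_deriv ?_
        field_simp
      rw [intervalIntegral.integral_eq_sub_of_hasDerivAt hF
        ((continuous_const.mul hcexp).intervalIntegrable t b)]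
      ring
    have hbound : |h b - h t| ≤ ε / l2 * (Real.exp (-(l2 * t)) - Real.exp (-(l2 * b))) := by
      rw [← hFTC, ← hintval]
      calc |∫ s in t..b, (g' s - l2 * g s) * Real.exp (-(l2 * s))|
          ≤ ∫ s in t..b, |(g' s - l2 * g s) * Real.exp (-(l2 * s))| :=
            intervalIntegral.abs_integral_le_integral_abs htb
        _ ≤ ∫ s in t..b, ε * Real.exp (-(l2 * s)) := by
            apply intervalIntegral.integral_mono_on htb hint1 hint2 hptw
    -- translate back
    have hexp : Real.exp (-(l2 * t)) * Real.exp (l2 * t) = 1 := by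
      rw [← Real.exp_add]; simp
    have key : g t - c * Real.exp (l2 * t) = (h t - h b) * Real.exp (l2 * t) := by
      have : h t * Real.exp (l2 * t) = g t := by
        simp only [hh]
        rw [mul_assoc, hexp, mul_one]
      rw [sub_mul, this, hc, hh]
    rw [key, abs_mul, abs_of_pos (Real.exp_pos _), abs_sub_comm]
    calc |h b - h t| * Real.exp (l2 * t)
        ≤ ε / l2 * (Real.exp (-(l2 * t)) - Real.exp (-(l2 * b))) * Real.exp (l2 * t) :=
          mul_le_mul_of_nonneg_right hbound (Real.exp_pos _).le
      _ = ε / l2 * (1 - Real.exp (-(l2 * b)) * Real.exp (l2 * t)) := by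
          rw [mul_assoc, sub_mul, hexp]
      _ ≤ ε / l2 * 1 := by
          apply mul_le_mul_of_nonneg_left _ (by positivity)
          have : 0 < Real.exp (-(l2 * b)) * Real.exp (l2 * t) := by positivity
          linarith
      _ = ε / l2 := mul_one _
end

section
/- Let λ > 0 and integers a < b, ε > 0. Suppose g : ℤ → ℝ satisfies |Δg(t) − λ g(t)| ≤ ε for all t ∈ [a, b−1], where Δg(t) = g(t+1) − g(t). Then there exists c ∈ ℝ such that the sequence z(t) := c (1+λ)^{t} satisfies Δz(t) = λ z(t) for all t and |g(t) − z(t)| ≤ ε/λ for all t ∈ [a, b]. -/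
open Set

theorem stmt_3 (l : ℝ) (a b : ℤ) (ε : ℝ) (hl : 0 < l) (hab : a < b) (hε : 0 < ε)
    (g : ℤ → ℝ)
    (happ : ∀ t ∈ Icc a (b - 1), |(g (t + 1) - g t) - l * g t| ≤ ε) :
    ∃ c : ℝ,
      (∀ t : ℤ, (c * (1 + l) ^ (t + 1) - c * (1 + l) ^ t) = l * (c * (1 + l) ^ t)) ∧
      (∀ t ∈ Icc a b, |g t - c * (1 + l) ^ t| ≤ ε / l) := by
  have h1l : (0:ℝ) < 1 + l := by linarith
  have hne : (1 + l : ℝ) ≠ 0 := ne_of_gt h1l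
  set c : ℝ := g b * (1 + l) ^ (-b) with hc
  refine ⟨c, fun t => by rw [zpow_add_one₀ hne]; ring, ?_⟩
  have key : ∀ n : ℕ, a ≤ b - n →
      |g (b - n) - c * (1 + l) ^ (b - (n:ℤ))| ≤ ε / l * (1 - (1 + l) ^ (-(n:ℤ))) := by
    intro n
    induction n with
    | zero =>
      intro _
      simp [hc, mul_assoc, ← zpow_add₀ hne, inv_mul_cancel₀ (zpow_ne_zero b hne)]
    | succ n ih =>
      intro hn
      have hn' : a ≤ b - n := by push_cast at hn ⊢; omega
      have ht : b - ((n:ℤ)+1) ∈ Icc a (b - 1) := by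
        constructor
        · push_cast at hn; omega
        · omega
      have hE := happ _ ht
      have hA := ih hn'
      have e1 : b - ((n:ℤ)+1) + 1 = b - n := by ring
      rw [e1] at hE
      have expand : g (b - ((n:ℤ)+1)) - c * (1 + l) ^ (b - ((n:ℤ)+1)) =
          ((g (b - n) - c * (1 + l) ^ (b - (n:ℤ)))
            - (g (b - n) - g (b - ((n:ℤ)+1)) - l * g (b - ((n:ℤ)+1)))) / (1 + l) := by
        have e2 : (1 + l) ^ (b - ((n:ℤ)+1)) = (1 + l) ^ (b - (n:ℤ)) / (1 + l) := by
          have e : b - ((n:ℤ)+1) = (b - (n:ℤ)) - 1 := by ring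
          rw [e, zpow_sub₀ hne, zpow_one]
        rw [e2]; field_simp; ring
      push_cast
      rw [expand]
      rw [abs_div, abs_of_pos h1l, div_le_iff₀ h1l]
      have habs : |(g (b - n) - c * (1 + l) ^ (b - (n:ℤ)))
            - (g (b - n) - g (b - ((n:ℤ)+1)) - l * g (b - ((n:ℤ)+1)))| ≤
          ε / l * (1 - (1 + l) ^ (-(n:ℤ))) + ε := by
        calc _ ≤ |g (b - n) - c * (1 + l) ^ (b - (n:ℤ))| +
              |g (b - n) - g (b - ((n:ℤ)+1)) - l * g (b - ((n:ℤ)+1))| := abs_sub _ _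
          _ ≤ _ := add_le_add hA hE
      refine habs.trans (le_of_eq ?_)
      have e3 : (1 + l) ^ (-((n:ℤ)+1)) = (1 + l) ^ (-(n:ℤ)) / (1 + l) := by
        have e : -((n:ℤ)+1) = -(n:ℤ) - 1 := by ring
        rw [e, zpow_sub₀ hne, zpow_one]
      rw [e3]
      field_simp
      ring
  intro t ht
  obtain ⟨hta, htb⟩ := ht
  have hn : ((b - t).toNat : ℤ) = b - t := Int.toNat_of_nonneg (by omega)
  have h := key (b - t).toNat (by rw [hn]; omega)
  rw [hn] at h
  have e4 : b - (b - t) = t := by ring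
  rw [e4] at h
  refine h.trans ?_
  have hpos : (0:ℝ) < (1 + l) ^ (-(((b - t).toNat:ℤ))) := zpow_pos h1l _
  rw [hn] at hpos
  have hεl : 0 < ε / l := div_pos hε hl
  nlinarith
end

section
/- Let a < b be integers and d, f : [a, b] → ℝ with 1 + d(t) ≠ 0 for all t ∈ [a, b−1]. Let E(t) := ∏_{r=a}^{t−1} (1 + d(r)) (with E(a) = 1), and L := max_{t ∈ [a,b]} |E(t)| · ∑_{s=a}^{t−1} |E(s+1)|^{−1}. Then for every ε > 0 and every g : ℤ → ℝ with |Δg(t) − d(t) g(t) − f(t)| ≤ ε for all t ∈ [a, b−1], the sequence w defined by w(a) = g(a) and w(t+1) = (1 + d(t)) w(t) + f(t) satisfies |g(t) − w(t)| ≤ L ε for all t ∈ [a, b]. -/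
/-!
Put `u = g - w`. Subtracting the recursion of `w` from the defect of `g` gives
`|u (t + 1)| ≤ |1 + d t| * |u t| + ε` with `u a = 0`. Since `E (t + 1) = (1 + d t) * E t`, dividing
by `|E (t + 1)|` yields `|u (t + 1)| / |E (t + 1)| ≤ |u t| / |E t| + ε / |E (t + 1)|`, which
telescopes to `|u t| ≤ ε * |E t| * ∑ s ∈ [a, t), |E (s + 1)|⁻¹ ≤ ε * L`.
-/

open Set

lemma le_add_sum_Ico_of_succ_le {a b : ℤ} {v w : ℤ → ℝ}
    (h : ∀ t ∈ Ico a b, v (t + 1) ≤ v t + w t) :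
    ∀ t ∈ Icc a b, v t ≤ v a + ∑ s ∈ Finset.Ico a t, w s := by
  rintro t ⟨hat, htb⟩
  induction t, hat using Int.leInduction with
  | base => simp
  | succ t hat ih =>
    rw [← Finset.sum_Ico_add_eq_sum_Ico_add_one hat]
    linarith [h t ⟨hat, by omega⟩, ih (by omega)]

/-- Discrete Grönwall inequality; `E` is the fundamental solution of `x (t + 1) = c t * x t`. -/
theorem abs_le_mul_sum_of_abs_succ_le {a b : ℤ} {c u E : ℤ → ℝ} {ε : ℝ}
    (hE : ∀ t ∈ Ico a b, E (t + 1) = c t * E t) (hE0 : ∀ t ∈ Icc a b, E t ≠ 0)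
    (hu₀ : u a = 0) (hu : ∀ t ∈ Ico a b, |u (t + 1)| ≤ |c t| * |u t| + ε) :
    ∀ t ∈ Icc a b, |u t| ≤ ε * (|E t| * ∑ s ∈ Finset.Ico a t, |E (s + 1)|⁻¹) := by
  have step : ∀ t ∈ Ico a b,
      |u (t + 1)| / |E (t + 1)| ≤ |u t| / |E t| + ε * |E (t + 1)|⁻¹ := by
    intro t ht
    have hEt : E t ≠ 0 := hE0 t (Ico_subset_Icc_self ht)
    have hEt1 : E (t + 1) ≠ 0 := hE0 (t + 1) ⟨by linarith [ht.1], ht.2⟩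
    have hct : c t ≠ 0 := left_ne_zero_of_mul (hE t ht ▸ hEt1)
    calc |u (t + 1)| / |E (t + 1)| ≤ (|c t| * |u t| + ε) / |E (t + 1)| := by
          gcongr
          exact hu t ht
      _ = |u t| / |E t| + ε * |E (t + 1)|⁻¹ := by
          rw [hE t ht, abs_mul]
          field_simp
  intro t ht
  have hv := le_add_sum_Ico_of_succ_le (v := fun t ↦ |u t| / |E t|)
    (w := fun s ↦ ε * |E (s + 1)|⁻¹) step t ht
  rw [hu₀, abs_zero, zero_div, zero_add, ← Finset.mul_sum,
    div_le_iff₀ (abs_pos.2 (hE0 t ht))] at hv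
  linarith

theorem stmt_5_general (a b : ℤ) (d f : ℤ → ℝ)
    (hd : ∀ t ∈ Icc a (b - 1), 1 + d t ≠ 0)
    (E : ℤ → ℝ) (hE : ∀ t, E t = ∏ r ∈ Finset.Ico a t, (1 + d r))
    (L : ℝ) (hne : (Finset.Icc a b).Nonempty)
    (hL : L = (Finset.Icc a b).sup' hne
      (fun t => |E t| * ∑ s ∈ Finset.Ico a t, |E (s + 1)|⁻¹))
    (ε : ℝ) (hε : 0 < ε) (g w : ℤ → ℝ)
    (happ : ∀ t ∈ Icc a (b - 1), |(g (t + 1) - g t) - d t * g t - f t| ≤ ε)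
    (hwa : w a = g a)
    (hw : ∀ t ∈ Icc a (b - 1), w (t + 1) = (1 + d t) * w t + f t) :
    ∀ t ∈ Icc a b, |g t - w t| ≤ L * ε := by
  have hE_succ : ∀ t ∈ Ico a b, E (t + 1) = (1 + d t) * E t := by
    intro t ht
    rw [hE, hE, ← Finset.prod_Ico_mul_eq_prod_Ico_add_one ht.1, mul_comm]
  have hE0 : ∀ t ∈ Icc a b, E t ≠ 0 := by
    rintro t ⟨-, htb⟩
    rw [hE, Finset.prod_ne_zero_iff]
    intro r hr
    rw [Finset.mem_Ico] at hr
    exact hd r ⟨hr.1, by omega⟩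
  have hdefect : ∀ t ∈ Ico a b, |(g - w) (t + 1)| ≤ |1 + d t| * |(g - w) t| + ε := by
    rintro t ⟨hat, htb⟩
    have ht' : t ∈ Icc a (b - 1) := ⟨hat, by omega⟩
    calc |(g - w) (t + 1)|
        = |(1 + d t) * (g t - w t) + ((g (t + 1) - g t) - d t * g t - f t)| := by
          rw [Pi.sub_apply, hw t ht']
          ring_nf
      _ ≤ |1 + d t| * |(g - w) t| + ε := by
          refine (abs_add_le _ _).trans ?_
          rw [abs_mul, Pi.sub_apply]
          gcongr
          exact happ t ht'
  intro t ht
  calc |g t - w t| ≤ ε * (|E t| * ∑ s ∈ Finset.Ico a t, |E (s + 1)|⁻¹) :=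
        abs_le_mul_sum_of_abs_succ_le hE_succ hE0 (by simp [hwa]) hdefect t ht
    _ ≤ ε * L := by
        rw [hL]
        gcongr
        exact Finset.le_sup' (fun t => |E t| * ∑ s ∈ Finset.Ico a t, |E (s + 1)|⁻¹)
          (Finset.mem_Icc.2 ht)
    _ = L * ε := mul_comm _ _

theorem stmt_5 (a b : ℤ) (hab : a < b) (d f : ℤ → ℝ)
    (hd : ∀ t ∈ Icc a (b - 1), 1 + d t ≠ 0)
    (E : ℤ → ℝ) (hE : ∀ t, E t = ∏ r ∈ Finset.Ico a t, (1 + d r))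
    (L : ℝ) (hne : (Finset.Icc a b).Nonempty)
    (hL : L = (Finset.Icc a b).sup' hne
      (fun t => |E t| * ∑ s ∈ Finset.Ico a t, |E (s + 1)|⁻¹))
    (ε : ℝ) (hε : 0 < ε) (g w : ℤ → ℝ)
    (happ : ∀ t ∈ Icc a (b - 1), |(g (t + 1) - g t) - d t * g t - f t| ≤ ε)
    (hwa : w a = g a)
    (hw : ∀ t ∈ Icc a (b - 1), w (t + 1) = (1 + d t) * w t + f t) :
    ∀ t ∈ Icc a b, |g t - w t| ≤ L * ε :=
  stmt_5_general a b d f hd E hE L hne hL ε hε g w happ hwa hw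
end

section
/- Let a < b be reals, p, q, f : [a,b] → ℝ continuous. Suppose z : [a,b] → ℝ is continuously differentiable and satisfies the Riccati equation z'(t) + p(t) z(t) − z(t)² = q(t) for all t ∈ [a,b]. Then for every ε > 0 and every twice continuously differentiable y : [a,b] → ℝ with |y''(t) + p(t) y'(t) + q(t) y(t) − f(t)| ≤ ε on [a,b], there exists a constant K > 0 (depending only on p, z, a, b, but not on y or ε) and a twice continuously differentiable u : [a,b] → ℝ with u''(t) + p(t) u'(t) + q(t) u(t) = f(t) on [a,b] and |y(t) − u(t)| ≤ K ε for all t ∈ [a,b]. -/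
/-!
The Riccati equation for `z` factors `L y = y'' + p y' + q y` as `L y = w' + (p - z) w` with
`w = y' + z y`. Each first-order equation `w' + r w = g` is Hyers–Ulam stable on `[a, b]`: the
defect times the integrating factor `exp (∫ r)` has derivative bounded by `exp B * ε`, where `B`
bounds `|∫ r|` on `[a, b]`. Solving `v' + (p - z) v = f` exactly and then `u' + z u = v` exactly
gives `u`, with `K` the product of the two first-order constants. The coefficients are first
extended from `[a, b]` to `ℝ` (`z` as a `C¹` function), so that the variation-of-constants
solutions are differentiable at the endpoints as well.
-/

open Set Real

theorem ContinuousOn.exists_continuous_eqOn_Icc_s6 {α β : Type*} [LinearOrder α] [TopologicalSpace α]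
    [OrderTopology α] [TopologicalSpace β] {a b : α} (hab : a ≤ b) {f : α → β}
    (hf : ContinuousOn f (Icc a b)) : ∃ g : α → β, Continuous g ∧ EqOn g f (Icc a b) :=
  ⟨IccExtend hab ((Icc a b).domRestrict f), continuous_IccExtend_iff.mpr hf.domRestrict,
    fun _ ht => IccExtend_of_mem hab _ ht⟩

theorem exists_hasDerivAt_eqOn_Icc {a b : ℝ} (hab : a ≤ b) {z z' : ℝ → ℝ}
    (hz : ∀ t ∈ Icc a b, HasDerivAt z (z' t) t) (hz' : ContinuousOn z' (Icc a b)) :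
    ∃ Z Z' : ℝ → ℝ, Continuous Z' ∧ (∀ t, HasDerivAt Z (Z' t) t) ∧
      EqOn Z z (Icc a b) ∧ EqOn Z' z' (Icc a b) := by
  obtain ⟨Z', hZ'c, hZ'⟩ := hz'.exists_continuous_eqOn_Icc_s6 hab
  refine ⟨fun t => z a + ∫ s in a..t, Z' s, Z', hZ'c,
    fun t => (hZ'c.integral_hasStrictDerivAt a t).hasDerivAt.const_add _, fun t ht => ?_, hZ'⟩
  have hsub : uIcc a t ⊆ Icc a b := uIcc_subset_Icc (left_mem_Icc.2 hab) ht
  beta_reduce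
  rw [intervalIntegral.integral_congr (hZ'.mono hsub),
    intervalIntegral.integral_eq_sub_of_hasDerivAt (fun x hx => hz x (hsub hx))
      ((hz'.mono hsub).intervalIntegrable)]
  ring

noncomputable def linearSolution (r g : ℝ → ℝ) (a c t : ℝ) : ℝ :=
  exp (-∫ x in a..t, r x) * (c + ∫ x in a..t, exp (∫ s in a..x, r s) * g x)

section linearSolution

variable {r g : ℝ → ℝ}

theorem linearSolution_self (r g : ℝ → ℝ) (a c : ℝ) : linearSolution r g a c a = c := by
  simp [linearSolution]

theorem hasDerivAt_linearSolution (hr : Continuous r) (hg : Continuous g) (a c t : ℝ) :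
    HasDerivAt (linearSolution r g a c) (g t - r t * linearSolution r g a c t) t := by
  have hR := (hr.integral_hasStrictDerivAt a t).hasDerivAt
  have hI : Continuous fun x => exp (∫ s in a..x, r s) * g x :=
    (intervalIntegral.differentiable_integral_of_continuous hr).continuous.rexp.mul hg
  refine (hR.neg.exp.mul ((hI.integral_hasStrictDerivAt a t).hasDerivAt.const_add c)).congr_deriv ?_
  have hinv : exp (-∫ x in a..t, r x) * exp (∫ x in a..t, r x) = 1 := by
    rw [← exp_add, neg_add_cancel, exp_zero]
  simp only [linearSolution]
  linear_combination g t * hinv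

theorem continuous_linearSolution (hr : Continuous r) (hg : Continuous g) (a c : ℝ) :
    Continuous (linearSolution r g a c) :=
  continuous_iff_continuousAt.2 fun t => (hasDerivAt_linearSolution hr hg a c t).continuousAt

theorem exists_abs_sub_linearSolution_le (hr : Continuous r) {a b : ℝ} (hab : a < b) :
    ∃ K > 0, ∀ g : ℝ → ℝ, Continuous g → ∀ (ε : ℝ) (w w' : ℝ → ℝ),
      (∀ t ∈ Icc a b, HasDerivAt w (w' t) t) →
      (∀ t ∈ Icc a b, |w' t + r t * w t - g t| ≤ ε) →
      ∀ t ∈ Icc a b, |w t - linearSolution r g a (w a) t| ≤ K * ε := by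
  have hRc := (intervalIntegral.differentiable_integral_of_continuous (a := a) hr).continuous
  obtain ⟨B, hB⟩ := (isCompact_Icc (a := a) (b := b)).exists_bound_of_continuousOn hRc.continuousOn
  simp only [norm_eq_abs, abs_le] at hB
  refine ⟨exp B * (exp B * (b - a)), by have := sub_pos.2 hab; positivity, ?_⟩
  intro g hg ε w w' hw hbd t ht
  set R : ℝ → ℝ := fun s => ∫ x in a..s, r x
  set E : ℝ → ℝ := fun s => exp (R s) * (w s - linearSolution r g a (w a) s)
  have hE : ∀ s ∈ Icc a b, HasDerivAt E (exp (R s) * (w' s + r s * w s - g s)) s := by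
    intro s hs
    refine ((hr.integral_hasStrictDerivAt a s).hasDerivAt.exp.mul
      ((hw s hs).sub (hasDerivAt_linearSolution hr hg a _ s))).congr_deriv ?_
    simp only [R, Pi.sub_apply]
    ring
  have hE' : ∀ s ∈ Icc a b, ‖exp (R s) * (w' s + r s * w s - g s)‖ ≤ exp B * ε := by
    intro s hs
    rw [norm_mul, norm_eq_abs, abs_exp]
    exact mul_le_mul (exp_le_exp.2 (hB s hs).2) (hbd s hs) (norm_nonneg _) (exp_pos B).le
  have hε : 0 ≤ ε := (abs_nonneg _).trans (hbd a (left_mem_Icc.2 hab.le))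
  have hEt : |E t| ≤ exp B * ε * (t - a) := by
    simpa [E, linearSolution_self] using norm_image_sub_le_of_norm_deriv_le_segment'
      (fun s hs => (hE s hs).hasDerivWithinAt) (fun s hs => hE' s (Ico_subset_Icc_self hs)) t ht
  have hdefect : w t - linearSolution r g a (w a) t = exp (-R t) * E t := by
    simp only [E, ← mul_assoc, ← exp_add, neg_add_cancel, exp_zero, one_mul]
  rw [hdefect, abs_mul, abs_exp]
  calc exp (-R t) * |E t| ≤ exp B * (exp B * ε * (b - a)) := by
        gcongr
        · linarith [(hB t ht).1]
        · exact hEt.trans (by gcongr; exact ht.2)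
    _ = exp B * (exp B * (b - a)) * ε := by ring

end linearSolution

theorem riccati_factorization {p q z z' y y' y'' : ℝ} (hric : z' + p * z - z ^ 2 = q) :
    y'' + (z' * y + z * y') + (p - z) * (y' + z * y) = y'' + p * y' + q * y := by
  linear_combination y * hric

theorem exists_hasDerivAt_linearSolution_linearSolution {a b : ℝ} {P q F Z Z' : ℝ → ℝ}
    (hP : Continuous P) (hF : Continuous F) (hZ' : Continuous Z') (hZ : ∀ t, HasDerivAt Z (Z' t) t)
    (hric : ∀ t ∈ Icc a b, Z' t + P t * Z t - Z t ^ 2 = q t) (c₀ c₁ : ℝ) :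
    ∃ u' u'' : ℝ → ℝ,
      (∀ t, HasDerivAt (linearSolution Z (linearSolution (P - Z) F a c₁) a c₀) (u' t) t) ∧
      (∀ t, HasDerivAt u' (u'' t) t) ∧ Continuous u'' ∧
      ∀ t ∈ Icc a b, u'' t + P t * u' t + q t *
        linearSolution Z (linearSolution (P - Z) F a c₁) a c₀ t = F t := by
  have hZc : Continuous Z := continuous_iff_continuousAt.2 fun t => (hZ t).continuousAt
  set v := linearSolution (P - Z) F a c₁
  set u := linearSolution Z v a c₀
  have hvc : Continuous v := continuous_linearSolution (hP.sub hZc) hF a c₁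
  have huc : Continuous u := continuous_linearSolution hZc hvc a c₀
  have hv := hasDerivAt_linearSolution (hP.sub hZc) hF a c₁
  have hu := hasDerivAt_linearSolution hZc hvc a c₀
  refine ⟨fun t => v t - Z t * u t,
    fun t => F t - (P - Z) t * v t - (Z' t * u t + Z t * (v t - Z t * u t)), hu,
    fun t => (hv t).sub ((hZ t).mul (hu t)), by fun_prop, fun t ht => ?_⟩
  rw [← riccati_factorization (hric t ht)]
  simp only [Pi.sub_apply]
  ring

theorem stmt_6_general (a b : ℝ) (hab : a < b) (p q f : ℝ → ℝ)
    (hp : ContinuousOn p (Icc a b))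
    (hf : ContinuousOn f (Icc a b))
    (z z' : ℝ → ℝ)
    (hz : ∀ t ∈ Icc a b, HasDerivAt z (z' t) t)
    (hz' : ContinuousOn z' (Icc a b))
    (hric : ∀ t ∈ Icc a b, z' t + p t * z t - (z t) ^ 2 = q t) :
    ∃ K > 0, ∀ ε > 0, ∀ y y' y'' : ℝ → ℝ,
      (∀ t ∈ Icc a b, HasDerivAt y (y' t) t) →
      (∀ t ∈ Icc a b, HasDerivAt y' (y'' t) t) →
      ContinuousOn y'' (Icc a b) →
      (∀ t ∈ Icc a b, |y'' t + p t * y' t + q t * y t - f t| ≤ ε) →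
      ∃ u u' u'' : ℝ → ℝ,
        (∀ t ∈ Icc a b, HasDerivAt u (u' t) t) ∧
        (∀ t ∈ Icc a b, HasDerivAt u' (u'' t) t) ∧
        ContinuousOn u'' (Icc a b) ∧
        (∀ t ∈ Icc a b, u'' t + p t * u' t + q t * u t = f t) ∧
        (∀ t ∈ Icc a b, |y t - u t| ≤ K * ε) := by
  obtain ⟨Z, Z', hZ'c, hZ, hZz, hZ'z'⟩ := exists_hasDerivAt_eqOn_Icc hab.le hz hz'
  obtain ⟨P, hPc, hPp⟩ := hp.exists_continuous_eqOn_Icc_s6 hab.le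
  obtain ⟨F, hFc, hFf⟩ := hf.exists_continuous_eqOn_Icc_s6 hab.le
  have hZc : Continuous Z := continuous_iff_continuousAt.2 fun t => (hZ t).continuousAt
  have hricZ : ∀ t ∈ Icc a b, Z' t + P t * Z t - Z t ^ 2 = q t := fun t ht => by
    rw [hZz ht, hZ'z' ht, hPp ht]; exact hric t ht
  obtain ⟨K₁, hK₁, hv⟩ := exists_abs_sub_linearSolution_le (hPc.sub hZc) hab
  obtain ⟨K₂, hK₂, hu⟩ := exists_abs_sub_linearSolution_le hZc hab
  refine ⟨K₂ * K₁, mul_pos hK₂ hK₁, fun ε _ y y' y'' hy hy' _ hL => ?_⟩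
  have hyv : ∀ t ∈ Icc a b,
      |y' t + Z t * y t - linearSolution (P - Z) F a (y' a + Z a * y a) t| ≤ K₁ * ε := by
    refine hv F hFc ε _ _ (fun t ht => (hy' t ht).add ((hZ t).mul (hy t ht))) fun t ht => ?_
    rw [Pi.sub_apply, riccati_factorization (hricZ t ht), hPp ht, hFf ht]
    exact hL t ht
  obtain ⟨u', u'', hu', hu'', hu''c, hLu⟩ :=
    exists_hasDerivAt_linearSolution_linearSolution hPc hFc hZ'c hZ hricZ (y a) (y' a + Z a * y a)
  refine ⟨_, u', u'', fun t _ => hu' t, fun t _ => hu'' t, hu''c.continuousOn, fun t ht => ?_,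
    fun t ht => ?_⟩
  · rw [← hPp ht, ← hFf ht]
    exact hLu t ht
  · rw [mul_assoc]
    exact hu _ (continuous_linearSolution (hPc.sub hZc) hFc a _) _ y y' hy hyv t ht

theorem stmt_6 (a b : ℝ) (hab : a < b) (p q f : ℝ → ℝ)
    (hp : ContinuousOn p (Icc a b)) (hq : ContinuousOn q (Icc a b))
    (hf : ContinuousOn f (Icc a b))
    (z z' : ℝ → ℝ)
    (hz : ∀ t ∈ Icc a b, HasDerivAt z (z' t) t)
    (hz' : ContinuousOn z' (Icc a b))
    (hric : ∀ t ∈ Icc a b, z' t + p t * z t - (z t) ^ 2 = q t) :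
    ∃ K > 0, ∀ ε > 0, ∀ y y' y'' : ℝ → ℝ,
      (∀ t ∈ Icc a b, HasDerivAt y (y' t) t) →
      (∀ t ∈ Icc a b, HasDerivAt y' (y'' t) t) →
      ContinuousOn y'' (Icc a b) →
      (∀ t ∈ Icc a b, |y'' t + p t * y' t + q t * y t - f t| ≤ ε) →
      ∃ u u' u'' : ℝ → ℝ,
        (∀ t ∈ Icc a b, HasDerivAt u (u' t) t) ∧
        (∀ t ∈ Icc a b, HasDerivAt u' (u'' t) t) ∧
        ContinuousOn u'' (Icc a b) ∧
        (∀ t ∈ Icc a b, u'' t + p t * u' t + q t * u t = f t) ∧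
        (∀ t ∈ Icc a b, |y t - u t| ≤ K * ε) :=
  stmt_6_general a b hab p q f hp hf z z' hz hz' hric
end

section
/- Let a < b be reals and α, β ∈ ℝ such that λ² + αλ + β = 0 has two distinct positive real roots. Then for every continuous f : [a,b] → ℝ, every ε > 0, and every twice continuously differentiable y : [a,b] → ℝ with |y''(t) + α y'(t) + β y(t) − f(t)| ≤ ε for all t ∈ [a,b], there exists K > 0 (independent of y, f, ε) and a twice continuously differentiable u : [a,b] → ℝ with u''(t) + α u'(t) + β u(t) = f(t) on [a,b] and |y(t) − u(t)| ≤ K ε on [a,b]. -/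
/-!
The operator `D² + αD + β` factors as `(D - l1)(D - l2)`. For `c > 0` the first-order equation
`z' = c z + e` has the solution `z t = -∫ s in t..b, exp (c (t - s)) e s`, obtained by integrating
backwards from `b`, and it satisfies `|z| ≤ sup |e| / c` on `(-∞, b]`. Solving `(D - l1) w = r`
for the residual `r = y'' + αy' + βy - f` and then `(D - l2) z = w` gives `|z| ≤ ε / (l1 l2)`,
and `u = y - z` is an exact solution.
-/

open Set Real intervalIntegral

theorem integral_exp_neg_mul {c : ℝ} (hc : c ≠ 0) (t b : ℝ) :
    ∫ s in t..b, exp (-(c * s)) = (exp (-(c * t)) - exp (-(c * b))) / c := by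
  have := intervalIntegral.integral_comp_mul_left (a := t) (b := b) exp (neg_ne_zero.2 hc)
  simp only [neg_mul, integral_exp, smul_eq_mul] at this
  rw [this]; field_simp; ring

section BackwardSolution

noncomputable def backwardSolution (c b : ℝ) (e : ℝ → ℝ) (t : ℝ) : ℝ :=
  exp (c * t) * ∫ s in b..t, exp (-(c * s)) * e s

variable {c b ε : ℝ} {e : ℝ → ℝ}

theorem hasDerivAt_backwardSolution (he : Continuous e) (t : ℝ) :
    HasDerivAt (backwardSolution c b e) (c * backwardSolution c b e t + e t) t := by
  have hg : Continuous fun s => exp (-(c * s)) * e s := by fun_prop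
  have hI : HasDerivAt (fun t => ∫ s in b..t, exp (-(c * s)) * e s) (exp (-(c * t)) * e t) t :=
    integral_hasDerivAt_right (hg.intervalIntegrable _ _)
      hg.stronglyMeasurable.stronglyMeasurableAtFilter hg.continuousAt
  have hE : HasDerivAt (fun t => exp (c * t)) (exp (c * t) * c) t := by
    simpa using ((hasDerivAt_id t).const_mul c).exp
  refine (hE.mul hI).congr_deriv ?_
  have hee : exp (c * t) * exp (-(c * t)) = 1 := by rw [← exp_add, add_neg_cancel, exp_zero]
  unfold backwardSolution
  linear_combination e t * hee

theorem continuous_backwardSolution (he : Continuous e) : Continuous (backwardSolution c b e) :=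
  continuous_iff_continuousAt.2 fun t => (hasDerivAt_backwardSolution he t).continuousAt

theorem abs_backwardSolution_le (hc : 0 < c) (he : Continuous e) (hbd : ∀ s ≤ b, |e s| ≤ ε)
    {t : ℝ} (ht : t ≤ b) : |backwardSolution c b e t| ≤ ε / c := by
  have hε : 0 ≤ ε := (abs_nonneg _).trans (hbd b le_rfl)
  have hI : |∫ s in b..t, exp (-(c * s)) * e s| ≤ ∫ s in t..b, ε * exp (-(c * s)) := by
    rw [integral_symm, abs_neg]
    refine abs_integral_le_integral_abs ht |>.trans (integral_mono_on ht ?_ ?_ fun s hs => ?_)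
    · exact (Continuous.intervalIntegrable (by fun_prop) _ _)
    · exact (Continuous.intervalIntegrable (by fun_prop) _ _)
    rw [abs_mul, abs_exp, mul_comm]
    exact mul_le_mul_of_nonneg_right (hbd s hs.2) (exp_pos _).le
  rw [integral_const_mul, integral_exp_neg_mul hc.ne'] at hI
  calc |backwardSolution c b e t|
      ≤ exp (c * t) * (ε * ((exp (-(c * t)) - exp (-(c * b))) / c)) := by
        rw [backwardSolution, abs_mul, abs_exp]; gcongr
    _ = ε / c * (1 - exp (c * t + -(c * b))) := by
        have hee : exp (c * t) * exp (-(c * t)) = 1 := by rw [← exp_add, add_neg_cancel, exp_zero]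
        rw [exp_add]; field_simp; linear_combination ε * hee
    _ ≤ ε / c :=
        mul_le_of_le_one_right (by positivity) (by linarith [exp_pos (c * t + -(c * b))])

end BackwardSolution

theorem ContinuousOn.exists_continuous_eqOn_Icc_abs_le {a b ε : ℝ} {g : ℝ → ℝ}
    (hab : a ≤ b) (hg : ContinuousOn g (Icc a b)) (hbd : ∀ t ∈ Icc a b, |g t| ≤ ε) :
    ∃ e : ℝ → ℝ, Continuous e ∧ EqOn e g (Icc a b) ∧ ∀ t, |e t| ≤ ε :=
  ⟨IccExtend hab ((Icc a b).domRestrict g),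
    (continuousOn_iff_continuous_domRestrict.mp hg).Icc_extend',
    fun _ ht => IccExtend_of_mem hab _ ht, fun t => hbd _ (projIcc a b hab t).2⟩

theorem stmt_10_general (a b α β l1 l2 : ℝ) (hab : a < b)
    (h1 : 0 < l1) (h2 : 0 < l2)
    (hchar : ∀ l : ℝ, l ^ 2 + α * l + β = (l - l1) * (l - l2)) :
    ∃ K > 0, ∀ f : ℝ → ℝ, ContinuousOn f (Icc a b) →
      ∀ ε > 0, ∀ y y' y'' : ℝ → ℝ,
      (∀ t ∈ Icc a b, HasDerivAt y (y' t) t) →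
      (∀ t ∈ Icc a b, HasDerivAt y' (y'' t) t) →
      ContinuousOn y'' (Icc a b) →
      (∀ t ∈ Icc a b, |y'' t + α * y' t + β * y t - f t| ≤ ε) →
      ∃ u u' u'' : ℝ → ℝ,
        (∀ t ∈ Icc a b, HasDerivAt u (u' t) t) ∧
        (∀ t ∈ Icc a b, HasDerivAt u' (u'' t) t) ∧
        ContinuousOn u'' (Icc a b) ∧
        (∀ t ∈ Icc a b, u'' t + α * u' t + β * u t = f t) ∧
        (∀ t ∈ Icc a b, |y t - u t| ≤ K * ε) := by
  have hβ : β = l1 * l2 := by linarith [hchar 0]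
  have hα : α = -(l1 + l2) := by linarith [hchar 1]
  refine ⟨1 / (l1 * l2), by positivity, fun f hf ε _ y y' y'' hy hy' hy'' hyf => ?_⟩
  have hres : ContinuousOn (fun t => y'' t + α * y' t + β * y t - f t) (Icc a b) := by
    have hyc : ContinuousOn y (Icc a b) := fun t ht => (hy t ht).continuousAt.continuousWithinAt
    have hy'c : ContinuousOn y' (Icc a b) := fun t ht => (hy' t ht).continuousAt.continuousWithinAt
    fun_prop
  obtain ⟨e, he, hee, hebd⟩ := hres.exists_continuous_eqOn_Icc_abs_le hab.le hyf
  set w := backwardSolution l1 b e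
  set z := backwardSolution l2 b w
  have hw : ∀ t, HasDerivAt w (l1 * w t + e t) t := hasDerivAt_backwardSolution he
  have hwc : Continuous w := continuous_backwardSolution he
  have hz : ∀ t, HasDerivAt z (l2 * z t + w t) t := hasDerivAt_backwardSolution hwc
  have hzc : Continuous z := continuous_backwardSolution hwc
  refine ⟨fun t => y t - z t, fun t => y' t - (l2 * z t + w t),
    fun t => y'' t - (l2 * (l2 * z t + w t) + (l1 * w t + e t)),
    fun t ht => (hy t ht).sub (hz t), fun t ht => (hy' t ht).sub (((hz t).const_mul l2).add (hw t)),
    hy''.sub (by fun_prop), fun t ht => ?_, fun t ht => ?_⟩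
  · linear_combination -hee ht - (l2 * z t + w t) * hα - z t * hβ
  · have hwb : ∀ s ≤ b, |w s| ≤ ε / l1 := fun s hs =>
      abs_backwardSolution_le h1 he (fun s _ => hebd s) hs
    calc |y t - (y t - z t)| = |z t| := by rw [sub_sub_cancel]
      _ ≤ ε / l1 / l2 := abs_backwardSolution_le h2 hwc hwb ht.2
      _ = 1 / (l1 * l2) * ε := by field_simp

theorem stmt_10 (a b α β l1 l2 : ℝ) (hab : a < b)
    (h1 : 0 < l1) (h2 : 0 < l2) (hne : l1 ≠ l2)
    (hchar : ∀ l : ℝ, l ^ 2 + α * l + β = (l - l1) * (l - l2)) :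
    ∃ K > 0, ∀ f : ℝ → ℝ, ContinuousOn f (Icc a b) →
      ∀ ε > 0, ∀ y y' y'' : ℝ → ℝ,
      (∀ t ∈ Icc a b, HasDerivAt y (y' t) t) →
      (∀ t ∈ Icc a b, HasDerivAt y' (y'' t) t) →
      ContinuousOn y'' (Icc a b) →
      (∀ t ∈ Icc a b, |y'' t + α * y' t + β * y t - f t| ≤ ε) →
      ∃ u u' u'' : ℝ → ℝ,
        (∀ t ∈ Icc a b, HasDerivAt u (u' t) t) ∧
        (∀ t ∈ Icc a b, HasDerivAt u' (u'' t) t) ∧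
        ContinuousOn u'' (Icc a b) ∧
        (∀ t ∈ Icc a b, u'' t + α * u' t + β * u t = f t) ∧
        (∀ t ∈ Icc a b, |y t - u t| ≤ K * ε) :=
  stmt_10_general a b α β l1 l2 hab h1 h2 hchar
end

section
/- Let a < b be integers, and p, q, f : ℤ → ℝ. Suppose z : ℤ → ℝ satisfies the discrete Riccati equation Δz(t) + p(t) z(t) − z(t) z(t+1) = q(t) with 1 + (z(t+1) − p(t)) ≠ 0 and 1 − z(t) ≠ 0 for all t ∈ [a, b−1]. Then there exists K > 0 (depending on z, p, a, b only) such that for every ε > 0 and y : ℤ → ℝ with |Δ²y(t) + p(t) Δy(t) + q(t) y(t) − f(t)| ≤ ε on [a, b−2], there exists u : ℤ → ℝ with Δ²u(t) + p(t) Δu(t) + q(t) u(t) = f(t) on [a, b−2] and |y(t) − u(t)| ≤ K ε on [a, b]. -/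
open Set

theorem stmt_11 (a b : ℤ) (hab : a < b) (p q f : ℤ → ℝ) (z : ℤ → ℝ)
    (hric : ∀ t ∈ Icc a (b - 1),
      (z (t + 1) - z t) + p t * z t - z t * z (t + 1) = q t)
    (h1 : ∀ t ∈ Icc a (b - 1), 1 + (z (t + 1) - p t) ≠ 0)
    (h2 : ∀ t ∈ Icc a (b - 1), 1 - z t ≠ 0) :
    ∃ K > 0, ∀ ε > 0, ∀ y : ℤ → ℝ,
      (∀ t ∈ Icc a (b - 2),
        |(y (t + 2) - 2 * y (t + 1) + y t) + p t * (y (t + 1) - y t) + q t * y t - f t| ≤ ε) →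
      ∃ u : ℤ → ℝ,
        (∀ t ∈ Icc a (b - 2),
          (u (t + 2) - 2 * u (t + 1) + u t) + p t * (u (t + 1) - u t) + q t * u t = f t) ∧
        (∀ t ∈ Icc a b, |y t - u t| ≤ K * ε) := by
  classical
  set N : ℕ := (b - a).toNat with hN
  set A : ℝ := ∑ t ∈ Finset.Icc a (b - 2), (|2 - p t| + |p t - q t - 1|) with hA
  have hA0 : 0 ≤ A := Finset.sum_nonneg (fun s _ => by positivity)
  set B : ℝ := 2 * A + 2 with hB
  have hB2 : (2 : ℝ) ≤ B := by simp [hB]; linarith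
  have hB1 : (1 : ℝ) ≤ B := by linarith
  have hcoef : ∀ t ∈ Finset.Icc a (b - 2), |2 - p t| + |p t - q t - 1| ≤ A := by
    intro t ht
    rw [hA]
    exact Finset.single_le_sum (f := fun s => |2 - p s| + |p s - q s - 1|)
      (fun s _ => by positivity) ht
  refine ⟨B ^ N, by positivity, ?_⟩
  intro ε hε y hy
  set F : ℕ → ℝ → ℝ → ℝ :=
    fun n x0 x1 => f (a + n) - p (a + n) * (x1 - x0) - q (a + n) * x0 + 2 * x1 - x0 with hF
  set g : ℕ → ℝ × ℝ :=
    fun n => Nat.rec ((y a, y (a + 1)) : ℝ × ℝ) (fun n gp => (gp.2, F n gp.1 gp.2)) n with hg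
  set u : ℤ → ℝ := fun t => (g (t - a).toNat).1 with hu
  have uval : ∀ n : ℕ, u (a + n) = (g n).1 := by
    intro n
    show (g ((a + (n : ℤ)) - a).toNat).1 = (g n).1
    have h : ((a + (n : ℤ)) - a).toNat = n := by omega
    rw [h]
  have gsucc : ∀ n : ℕ, g (n + 1) = ((g n).2, F n (g n).1 (g n).2) := fun n => rfl
  have uval1 : ∀ n : ℕ, u (a + n + 1) = (g n).2 := by
    intro n
    have : a + (n : ℤ) + 1 = a + ((n + 1 : ℕ) : ℤ) := by push_cast; ring
    rw [this, uval (n + 1), gsucc]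
  have uval2 : ∀ n : ℕ, u (a + n + 2) = F n (g n).1 (g n).2 := by
    intro n
    have : a + (n : ℤ) + 2 = a + ((n + 1 : ℕ) : ℤ) + 1 := by push_cast; ring
    rw [this, uval1 (n + 1), gsucc]
  have huEq : ∀ n : ℕ,
      (u (a + n + 2) - 2 * u (a + n + 1) + u (a + n)) +
        p (a + n) * (u (a + n + 1) - u (a + n)) + q (a + n) * u (a + n) = f (a + n) := by
    intro n
    rw [uval, uval1, uval2, hF]
    ring
  -- key error estimate
  have key : ∀ n : ℕ, a + (n : ℤ) ≤ b → |y (a + n) - u (a + n)| ≤ (B ^ n - 1) * ε := by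
    intro n
    induction n using Nat.strong_induction_on with
    | _ n ih =>
      match n with
      | 0 =>
        intro _
        have : u (a + (0 : ℕ)) = y a := by rw [uval]; rfl
        rw [this]
        norm_num
      | 1 =>
        intro _
        have : u (a + (1 : ℕ)) = y (a + 1) := by rw [uval]; rfl
        rw [this]
        have : a + ((1 : ℕ) : ℤ) = a + 1 := by norm_num
        rw [this]
        simp
        nlinarith
      | (n + 2) =>
        intro hle
        have hle' : a + (n : ℤ) ≤ b - 2 := by push_cast at hle ⊢; omega
        have htmem : (a + (n : ℤ)) ∈ Finset.Icc a (b - 2) := by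
          simp only [Finset.mem_Icc]; omega
        have htmem' : (a + (n : ℤ)) ∈ Set.Icc a (b - 2) := by
          simp only [Set.mem_Icc]; omega
        have hyb := hy (a + (n : ℤ)) htmem'
        have hub := huEq n
        set t : ℤ := a + (n : ℤ) with ht
        set d0 : ℝ := y t - u t with hd0
        set d1 : ℝ := y (t + 1) - u (t + 1) with hd1
        set d2 : ℝ := y (t + 2) - u (t + 2) with hd2
        have hE : |d2 - 2 * d1 + d0 + p t * (d1 - d0) + q t * d0| ≤ ε := by
          have : d2 - 2 * d1 + d0 + p t * (d1 - d0) + q t * d0 =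
              ((y (t + 2) - 2 * y (t + 1) + y t) + p t * (y (t + 1) - y t) + q t * y t - f t) -
              (((u (t + 2) - 2 * u (t + 1) + u t) + p t * (u (t + 1) - u t) + q t * u t) - f t) := by
            rw [hd0, hd1, hd2]; ring
          rw [this, hub]
          simpa using hyb
        have hd0b : |d0| ≤ (B ^ n - 1) * ε := ih n (by omega) (by push_cast; omega)
        have hd1b : |d1| ≤ (B ^ (n + 1) - 1) * ε := by
          have h1' := ih (n + 1) (by omega) (by push_cast; push_cast at hle; omega)
          have : a + ((n + 1 : ℕ) : ℤ) = t + 1 := by rw [ht]; push_cast; ring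
          rwa [this] at h1'
        have hAc := hcoef t htmem
        have hc1 : |2 - p t| ≤ A := by
          have := abs_nonneg (p t - q t - 1); linarith
        have hc2 : |p t - q t - 1| ≤ A := by
          have := abs_nonneg (2 - p t); linarith
        have hgoal : |d2| ≤ (B ^ (n + 2) - 1) * ε := by
          have habs : |d2| ≤ |d2 - 2 * d1 + d0 + p t * (d1 - d0) + q t * d0| +
              |(2 - p t) * d1| + |(p t - q t - 1) * d0| := by
            have h3 := abs_add_three (d2 - 2 * d1 + d0 + p t * (d1 - d0) + q t * d0)
              ((2 - p t) * d1) ((p t - q t - 1) * d0)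
            have heq : d2 - 2 * d1 + d0 + p t * (d1 - d0) + q t * d0 +
                (2 - p t) * d1 + (p t - q t - 1) * d0 = d2 := by ring
            rwa [heq] at h3
          calc |d2| ≤ |d2 - 2 * d1 + d0 + p t * (d1 - d0) + q t * d0| +
                |(2 - p t) * d1| + |(p t - q t - 1) * d0| := habs
            _ ≤ ε + A * ((B ^ (n + 1) - 1) * ε) + A * ((B ^ n - 1) * ε) := by
                gcongr
                · rw [abs_mul]
                  exact mul_le_mul hc1 hd1b (abs_nonneg _) hA0
                · rw [abs_mul]
                  exact mul_le_mul hc2 hd0b (abs_nonneg _) hA0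
            _ ≤ (B ^ (n + 2) - 1) * ε := by
                have hpn : (1 : ℝ) ≤ B ^ n := one_le_pow₀ hB1
                have hpn1 : B ^ n ≤ B ^ (n + 1) := pow_le_pow_right₀ hB1 (Nat.le_succ n)
                have hpn2 : (1 : ℝ) ≤ B ^ (n + 1) := one_le_pow₀ hB1
                have hBeq : B = 2 * A + 2 := hB
                have hpow2 : B ^ (n + 2) = 2 * A * B ^ (n + 1) + 2 * B ^ (n + 1) := by
                  calc B ^ (n + 2) = B * B ^ (n + 1) := by ring
                    _ = 2 * A * B ^ (n + 1) + 2 * B ^ (n + 1) := by rw [hBeq]; ring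
                have hnum : 1 + A * (B ^ (n + 1) - 1) + A * (B ^ n - 1) ≤ B ^ (n + 2) - 1 := by
                  nlinarith [mul_le_mul_of_nonneg_left hpn1 hA0]
                calc ε + A * ((B ^ (n + 1) - 1) * ε) + A * ((B ^ n - 1) * ε)
                    = (1 + A * (B ^ (n + 1) - 1) + A * (B ^ n - 1)) * ε := by ring
                  _ ≤ (B ^ (n + 2) - 1) * ε := mul_le_mul_of_nonneg_right hnum hε.le
        have : a + ((n + 2 : ℕ) : ℤ) = t + 2 := by rw [ht]; push_cast; ring
        rw [this]
        exact hgoal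
  refine ⟨u, ?_, ?_⟩
  · intro t ht
    obtain ⟨ht1, ht2⟩ := ht
    obtain ⟨n, rfl⟩ : ∃ n : ℕ, t = a + (n : ℤ) := ⟨(t - a).toNat, by omega⟩
    exact huEq n
  · intro t ht
    obtain ⟨ht1, ht2⟩ := ht
    obtain ⟨n, rfl⟩ : ∃ n : ℕ, t = a + (n : ℤ) := ⟨(t - a).toNat, by omega⟩
    have hk := key n (by omega)
    have hnN : n ≤ N := by omega
    have hmono : B ^ n ≤ B ^ N := pow_le_pow_right₀ hB1 hnN
    calc |y (a + (n : ℤ)) - u (a + (n : ℤ))| ≤ (B ^ n - 1) * ε := hk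
      _ ≤ B ^ N * ε := by nlinarith
end

section
/- For every λ > 0 and reals a < b, the Hyers–Ulam constant for x' = λx on [a,b] can be taken independent of b − a: if g : [a,b] → ℝ is C¹ with |g'(t) − λ g(t)| ≤ ε on [a,b], then the function z(t) := g(b) e^{λ(t−b)} satisfies |g(t) − z(t)| ≤ ε/λ for all t ∈ [a,b]. -/
/-!
With the integrating factor `e^{-λs}`, the function `u s = g s * e^{-λs}` has
`|u'(s)| ≤ ε e^{-λs}`, the derivative of `-(ε/λ) e^{-λs}`. Fencing `u` between `t` and `b` gives
`|u t - u b| ≤ (ε/λ)(e^{-λt} - e^{-λb})`, and multiplying back by `e^{λt}` yields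
`|g t - g b e^{λ(t-b)}| ≤ (ε/λ)(1 - e^{λ(t-b)}) ≤ ε/λ`.
-/

open Set Real

theorem hasDerivAt_mul_exp_neg_mul {g : ℝ → ℝ} {g' l t : ℝ} (hg : HasDerivAt g g' t) :
    HasDerivAt (fun s => g s * exp (-(l * s))) ((g' - l * g t) * exp (-(l * t))) t := by
  have hE : HasDerivAt (fun s => exp (-(l * s))) (exp (-(l * t)) * -l) t :=
    ((hasDerivAt_id t).const_mul l).neg.exp.congr_deriv (by simp)
  exact (hg.mul hE).congr_deriv (by ring)

theorem exp_mul_sub_eq_mul_exp_neg_mul (l t b : ℝ) :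
    exp (l * (t - b)) = exp (-(l * b)) * exp (l * t) := by
  rw [← exp_add]; ring_nf

theorem abs_sub_mul_exp_le_of_abs_deriv_sub_mul_le {g g' : ℝ → ℝ} {l t b ε : ℝ} (hl : l ≠ 0)
    (htb : t ≤ b) (hg : ∀ s ∈ Icc t b, HasDerivAt g (g' s) s)
    (happ : ∀ s ∈ Icc t b, |g' s - l * g s| ≤ ε) :
    |g t - g b * exp (l * (t - b))| ≤ ε / l * (1 - exp (l * (t - b))) := by
  set u : ℝ → ℝ := fun s => g s * exp (-(l * s))
  have hu (s) (hs : s ∈ Icc t b) : HasDerivAt (fun s => u s - u t)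
      ((g' s - l * g s) * exp (-(l * s))) s :=
    (hasDerivAt_mul_exp_neg_mul (hg s hs)).sub_const _
  have hB (s : ℝ) : HasDerivAt (fun s => ε / l * (exp (-(l * t)) - exp (-(l * s))))
      (ε * exp (-(l * s))) s :=
    ((((hasDerivAt_id s).const_mul l).neg.exp).const_sub _).const_mul (ε / l)
      |>.congr_deriv (by field_simp; simp)
  have fence := image_norm_le_of_norm_deriv_right_le_deriv_boundary
    (fun s hs => (hu s hs).continuousAt.continuousWithinAt)
    (fun s hs => (hu s (Ico_subset_Icc_self hs)).hasDerivWithinAt) (by simp) hB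
    (fun s hs => by
      rw [Real.norm_eq_abs, abs_mul, abs_of_pos (exp_pos _)]
      exact mul_le_mul_of_nonneg_right (happ s (Ico_subset_Icc_self hs)) (exp_pos _).le)
    (right_mem_Icc.2 htb)
  rw [Real.norm_eq_abs, abs_sub_comm] at fence
  have hexp : exp (-(l * t)) * exp (l * t) = 1 := by rw [← exp_add]; simp
  calc |g t - g b * exp (l * (t - b))| = |u t - u b| * exp (l * t) := by
        rw [← abs_of_pos (exp_pos (l * t)), ← abs_mul, exp_mul_sub_eq_mul_exp_neg_mul]
        congr 1
        linear_combination (-g t) * hexp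
    _ ≤ ε / l * (exp (-(l * t)) - exp (-(l * b))) * exp (l * t) := by gcongr
    _ = ε / l * (1 - exp (l * (t - b))) := by
        rw [exp_mul_sub_eq_mul_exp_neg_mul, ← hexp]; ring

theorem stmt_14_general (l a b ε : ℝ) (hl : 0 < l)
    (g g' : ℝ → ℝ)
    (hg : ∀ t ∈ Icc a b, HasDerivAt g (g' t) t)
    (happ : ∀ t ∈ Icc a b, |g' t - l * g t| ≤ ε) :
    ∀ t ∈ Icc a b, |g t - g b * Real.exp (l * (t - b))| ≤ ε / l := by
  intro t ht
  have hε : 0 ≤ ε := (abs_nonneg _).trans (happ t ht)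
  have hsub : Icc t b ⊆ Icc a b := Icc_subset_Icc_left ht.1
  calc |g t - g b * exp (l * (t - b))| ≤ ε / l * (1 - exp (l * (t - b))) :=
        abs_sub_mul_exp_le_of_abs_deriv_sub_mul_le hl.ne' ht.2 (fun s hs => hg s (hsub hs))
          (fun s hs => happ s (hsub hs))
    _ ≤ ε / l := mul_le_of_le_one_right (div_nonneg hε hl.le) (sub_le_self _ (exp_pos _).le)

theorem stmt_14 (l a b ε : ℝ) (hl : 0 < l) (hab : a < b) (hε : 0 < ε)
    (g g' : ℝ → ℝ)
    (hg : ∀ t ∈ Icc a b, HasDerivAt g (g' t) t)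
    (hg' : ContinuousOn g' (Icc a b))
    (happ : ∀ t ∈ Icc a b, |g' t - l * g t| ≤ ε) :
    ∀ t ∈ Icc a b, |g t - g b * Real.exp (l * (t - b))| ≤ ε / l :=
  stmt_14_general l a b ε hl g g' hg happ
end

section
/- Let λ₁ ≠ λ₂ both be positive and a < b real. If y : [a,b] → ℝ is C² with |y''(t) − (λ₁+λ₂) y'(t) + λ₁λ₂ y(t)| ≤ ε on [a,b], then there exists a C² function u with u'' − (λ₁+λ₂)u' + λ₁λ₂ u = 0 on [a,b] and |y(t) − u(t)| ≤ (1/λ₁)(1 + 1/λ₂) ε for all t in [a,b]. -/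
open Set

lemma key_stab (l δ a b : ℝ) (hl : 0 < l) (f f' : ℝ → ℝ)
    (hf : ∀ t ∈ Icc a b, HasDerivAt f (f' t) t)
    (hf' : ContinuousOn f' (Icc a b))
    (hbd : ∀ t ∈ Icc a b, |f' t - l * f t| ≤ δ)
    (hfb : b ∈ Icc a b → f b = 0) :
    ∀ t ∈ Icc a b, |f t| ≤ δ / l := by
  intro t ht
  by_cases hab : a ≤ b
  · have hb : b ∈ Icc a b := ⟨hab, le_refl b⟩
    have hδ : 0 ≤ δ := le_trans (abs_nonneg _) (hbd b hb)
    set φ : ℝ → ℝ := fun s => f s * Real.exp (-l * s) with hφdef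
    set φ' : ℝ → ℝ := fun s => (f' s - l * f s) * Real.exp (-l * s) with hφ'def
    have hφ : ∀ s ∈ Icc a b, HasDerivAt φ (φ' s) s := by
      intro s hs
      have he : HasDerivAt (fun x => Real.exp (-l * x)) (Real.exp (-l * s) * (-l)) s :=
        ((hasDerivAt_id s).const_mul (-l)).exp.congr_deriv (by simp)
      have := (hf s hs).mul he
      refine this.congr_deriv ?_
      simp only [hφ'def]; ring
    have hcf : ContinuousOn f (Icc a b) := fun s hs => (hf s hs).continuousAt.continuousWithinAt
    have hcφ' : ContinuousOn φ' (Icc a b) := by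
      apply ContinuousOn.mul
      · exact hf'.sub (continuousOn_const.mul hcf)
      · exact (Real.continuous_exp.comp (continuous_const.mul continuous_id)).continuousOn
    have htb : t ≤ b := ht.2
    have hsub : Icc t b ⊆ Icc a b := Icc_subset_Icc ht.1 le_rfl
    have hftc : ∫ s in t..b, φ' s = φ b - φ t := by
      apply intervalIntegral.integral_eq_sub_of_hasDerivAt
      · intro s hs
        rw [uIcc_of_le htb] at hs
        exact hφ s (hsub hs)
      · exact (hcφ'.mono hsub).intervalIntegrable_of_Icc htb
    have hφb : φ b = 0 := by simp [hφdef, hfb hb]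
    have hbound : |φ t| ≤ ∫ s in t..b, δ * Real.exp (-l * s) := by
      have h1 : |φ t| = |∫ s in t..b, φ' s| := by rw [hftc, hφb]; rw [abs_sub_comm]; simp
      rw [h1]
      have h2 : |∫ s in t..b, φ' s| ≤ ∫ s in t..b, |φ' s| :=
        intervalIntegral.abs_integral_le_integral_abs htb
      refine h2.trans ?_
      apply intervalIntegral.integral_mono_on htb
      · exact ((hcφ'.mono hsub).abs).intervalIntegrable_of_Icc htb
      · apply ContinuousOn.intervalIntegrable_of_Icc htb
        exact (continuous_const.mul (Real.continuous_exp.comp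
          (continuous_const.mul continuous_id))).continuousOn
      · intro s hs
        have : |φ' s| = |f' s - l * f s| * Real.exp (-l * s) := by
          simp [hφ'def, abs_mul, abs_of_pos (Real.exp_pos _)]
        rw [this]
        exact mul_le_mul_of_nonneg_right (hbd s (hsub hs)) (Real.exp_pos _).le
    have hcomp : ∫ s in t..b, δ * Real.exp (-l * s)
        = δ / l * Real.exp (-l * t) - δ / l * Real.exp (-l * b) := by
      have : ∀ s ∈ uIcc t b, HasDerivAt (fun x => -(δ / l) * Real.exp (-l * x))
          (δ * Real.exp (-l * s)) s := by
        intro s _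
        have he : HasDerivAt (fun x => Real.exp (-l * x)) (Real.exp (-l * s) * (-l)) s :=
          ((hasDerivAt_id s).const_mul (-l)).exp.congr_deriv (by simp)
        have := he.const_mul (-(δ / l))
        refine this.congr_deriv ?_
        field_simp
      rw [intervalIntegral.integral_eq_sub_of_hasDerivAt this]
      · ring
      · apply ContinuousOn.intervalIntegrable
        exact (continuous_const.mul (Real.continuous_exp.comp
          (continuous_const.mul continuous_id))).continuousOn
    rw [hcomp] at hbound
    have hft : f t = φ t * Real.exp (l * t) := by
      simp only [hφdef]
      rw [mul_assoc, ← Real.exp_add]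
      simp
    rw [hft, abs_mul, abs_of_pos (Real.exp_pos _)]
    have e1 : Real.exp (-l * t) * Real.exp (l * t) = 1 := by
      rw [← Real.exp_add]; simp
    have e2 : 0 < Real.exp (-l * b) * Real.exp (l * t) := by positivity
    have hδl : 0 ≤ δ / l := by positivity
    nlinarith [mul_le_mul_of_nonneg_right hbound (Real.exp_pos (l * t)).le,
      abs_nonneg (φ t), Real.exp_pos (l * t)]
  · exact absurd ht.1 (by intro h; exact hab (h.trans ht.2))

theorem stmt_16 (l1 l2 a b ε : ℝ) (h1 : 0 < l1) (h2 : 0 < l2)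
    (hne : l1 ≠ l2) (hab : a < b) (hε : 0 < ε)
    (y y' y'' : ℝ → ℝ)
    (hy : ∀ t ∈ Icc a b, HasDerivAt y (y' t) t)
    (hy' : ∀ t ∈ Icc a b, HasDerivAt y' (y'' t) t)
    (hy'' : ContinuousOn y'' (Icc a b))
    (happ : ∀ t ∈ Icc a b, |y'' t - (l1 + l2) * y' t + l1 * l2 * y t| ≤ ε) :
    ∃ u u' u'' : ℝ → ℝ,
      (∀ t ∈ Icc a b, HasDerivAt u (u' t) t) ∧
      (∀ t ∈ Icc a b, HasDerivAt u' (u'' t) t) ∧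
      ContinuousOn u'' (Icc a b) ∧
      (∀ t ∈ Icc a b, u'' t - (l1 + l2) * u' t + l1 * l2 * u t = 0) ∧
      (∀ t ∈ Icc a b, |y t - u t| ≤ (1 / l1) * (1 + 1 / l2) * ε) := by
  have hsub : l2 - l1 ≠ 0 := sub_ne_zero.mpr hne.symm
  set B : ℝ := (y' b - l1 * y b) / (l2 - l1) with hB
  set A : ℝ := y b - B with hA
  set E1 : ℝ → ℝ := fun t => Real.exp (l1 * (t - b)) with hE1
  set E2 : ℝ → ℝ := fun t => Real.exp (l2 * (t - b)) with hE2
  set u : ℝ → ℝ := fun t => A * E1 t + B * E2 t with hu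
  set u' : ℝ → ℝ := fun t => l1 * A * E1 t + l2 * B * E2 t with hu'
  set u'' : ℝ → ℝ := fun t => l1 ^ 2 * A * E1 t + l2 ^ 2 * B * E2 t with hu''
  have hE1d : ∀ t : ℝ, HasDerivAt E1 (l1 * E1 t) t := by
    intro t
    have := (((hasDerivAt_id t).sub_const b).const_mul l1).exp
    simpa [hE1, mul_comm] using this
  have hE2d : ∀ t : ℝ, HasDerivAt E2 (l2 * E2 t) t := by
    intro t
    have := (((hasDerivAt_id t).sub_const b).const_mul l2).exp
    simpa [hE2, mul_comm] using this
  have hud : ∀ t : ℝ, HasDerivAt u (u' t) t := by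
    intro t
    have := ((hE1d t).const_mul A).add ((hE2d t).const_mul B)
    refine this.congr_deriv ?_
    simp only [hu']; ring
  have hu'd : ∀ t : ℝ, HasDerivAt u' (u'' t) t := by
    intro t
    have := ((hE1d t).const_mul (l1 * A)).add ((hE2d t).const_mul (l2 * B))
    refine this.congr_deriv ?_
    simp only [hu'']; ring
  have hE1c : Continuous E1 := Real.continuous_exp.comp (continuous_const.mul (continuous_id.sub continuous_const))
  have hE2c : Continuous E2 := Real.continuous_exp.comp (continuous_const.mul (continuous_id.sub continuous_const))
  have huc : Continuous u := (continuous_const.mul hE1c).add (continuous_const.mul hE2c)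
  have hu'c : Continuous u' := (continuous_const.mul hE1c).add (continuous_const.mul hE2c)
  have hu''c : Continuous u'' := (continuous_const.mul hE1c).add (continuous_const.mul hE2c)
  have hode : ∀ t : ℝ, u'' t - (l1 + l2) * u' t + l1 * l2 * u t = 0 := by
    intro t; simp only [hu, hu', hu'']; ring
  have hyc : ContinuousOn y (Icc a b) := fun t ht => (hy t ht).continuousAt.continuousWithinAt
  have hy'c : ContinuousOn y' (Icc a b) := fun t ht => (hy' t ht).continuousAt.continuousWithinAt
  -- step 1
  have step1 : ∀ t ∈ Icc a b,
      |((y' t - l1 * y t) - (u' t - l1 * u t))| ≤ ε / l2 := by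
    apply key_stab l2 ε a b h2
      (fun t => (y' t - l1 * y t) - (u' t - l1 * u t))
      (fun t => (y'' t - l1 * y' t) - (u'' t - l1 * u' t))
    · intro t ht
      exact ((hy' t ht).sub ((hy t ht).const_mul l1)).sub
        ((hu'd t).sub ((hud t).const_mul l1))
    · exact ((hy''.sub (continuousOn_const.mul hy'c)).sub
        ((hu''c.sub (continuous_const.mul hu'c)).continuousOn))
    · intro t ht
      have h0 := hode t
      have : (y'' t - l1 * y' t - (u'' t - l1 * u' t)) - l2 * (y' t - l1 * y t - (u' t - l1 * u t))
          = y'' t - (l1 + l2) * y' t + l1 * l2 * y t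
            - (u'' t - (l1 + l2) * u' t + l1 * l2 * u t) := by ring
      rw [this, h0, sub_zero]
      exact happ t ht
    · intro _
      have e1 : E1 b = 1 := by simp [hE1]
      have e2 : E2 b = 1 := by simp [hE2]
      simp only [hu, hu', e1, e2, mul_one, hB]
      field_simp
      ring
  -- step 2
  have step2 : ∀ t ∈ Icc a b, |y t - u t| ≤ (ε / l2) / l1 := by
    apply key_stab l1 (ε / l2) a b h1 (fun t => y t - u t) (fun t => y' t - u' t)
    · intro t ht; exact (hy t ht).sub (hud t)
    · exact hy'c.sub hu'c.continuousOn
    · intro t ht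
      have : (y' t - u' t) - l1 * (y t - u t)
          = (y' t - l1 * y t) - (u' t - l1 * u t) := by ring
      rw [this]
      exact step1 t ht
    · intro _
      have e1 : E1 b = 1 := by simp [hE1]
      have e2 : E2 b = 1 := by simp [hE2]
      simp only [hu, e1, e2, mul_one, hA]
      ring
  refine ⟨u, u', u'', fun t _ => hud t, fun t _ => hu'd t, hu''c.continuousOn,
    fun t _ => hode t, fun t ht => ?_⟩
  refine (step2 t ht).trans ?_
  rw [div_div]
  have hle : 1 / l2 ≤ 1 + 1 / l2 := by linarith
  have : (1 / l1) * (1 / l2) * ε ≤ (1 / l1) * (1 + 1 / l2) * ε := by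
    gcongr
  calc ε / (l2 * l1) = (1 / l1) * (1 / l2) * ε := by ring
    _ ≤ _ := this
end

section
/- Let a < b be integers, λ > 0, and s : ℤ → ℝ. If y : ℤ → ℝ satisfies |Δy(t) − λ y(t) − s(t)| ≤ ε for all t ∈ [a, b−1], then the sequence u defined backward by u(b) = y(b) and u(t) = (u(t+1) − s(t))/(1+λ) for t ∈ [a, b−1] satisfies Δu(t) = λ u(t) + s(t) on [a, b−1] and |y(t) − u(t)| ≤ ε/λ · (1 − (1+λ)^{t−b}) ≤ ε/λ for all t ∈ [a, b]. -/
open Set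

theorem stmt_17 (a b : ℤ) (l ε : ℝ) (hab : a < b) (hl : 0 < l) (hε : 0 < ε)
    (s y u : ℤ → ℝ)
    (happ : ∀ t ∈ Icc a (b - 1), |(y (t + 1) - y t) - l * y t - s t| ≤ ε)
    (hub : u b = y b)
    (hu : ∀ t ∈ Icc a (b - 1), u t = (u (t + 1) - s t) / (1 + l)) :
    (∀ t ∈ Icc a (b - 1), u (t + 1) - u t = l * u t + s t) ∧
    (∀ t ∈ Icc a b,
      |y t - u t| ≤ ε / l * (1 - (1 + l) ^ (t - b)) ∧
      ε / l * (1 - (1 + l) ^ (t - b)) ≤ ε / l) := by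
  have h1l : (0:ℝ) < 1 + l := by linarith
  have hne : (1:ℝ) + l ≠ 0 := ne_of_gt h1l
  have hl' : l ≠ 0 := ne_of_gt hl
  refine ⟨?_, ?_⟩
  · intro t ht
    have h := hu t ht
    rw [eq_div_iff hne] at h
    have h2 : u t * (1 + l) = u t + l * u t := by ring
    linarith
  · have key : ∀ n : ℕ, a ≤ b - n →
        |y (b - n) - u (b - n)| ≤ ε / l * (1 - (1 + l) ^ ((b - (n:ℤ)) - b)) := by
      intro n
      induction n with
      | zero =>
        intro _
        simp [hub]
      | succ n ih =>
        intro hn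
        push_cast at hn
        have hn' : a ≤ b - (n:ℤ) := by omega
        have ih' := ih (by push_cast; omega)
        rw [(by ring : (b - (n:ℤ)) - b = -(n:ℤ))] at ih'
        have htmem : b - ((n:ℤ) + 1) ∈ Icc a (b - 1) := by
          simp only [mem_Icc]; omega
        have ht1 : b - ((n:ℤ) + 1) + 1 = b - (n:ℤ) := by ring
        have hδ := happ _ htmem
        have huu := hu _ htmem
        rw [ht1] at hδ huu
        set x : ℝ := (1 + l) ^ (-(n:ℤ)) with hxdef
        have hxpos : (0:ℝ) < x := zpow_pos h1l _
        have hyt : y (b - ((n:ℤ) + 1)) - u (b - ((n:ℤ) + 1)) =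
            ((y (b - (n:ℤ)) - u (b - (n:ℤ))) -
              ((y (b - (n:ℤ)) - y (b - ((n:ℤ) + 1))) - l * y (b - ((n:ℤ) + 1)) - s (b - ((n:ℤ) + 1)))) / (1 + l) := by
          rw [huu]
          field_simp
          ring
        have habs : |y (b - ((n:ℤ) + 1)) - u (b - ((n:ℤ) + 1))| ≤
            (|y (b - (n:ℤ)) - u (b - (n:ℤ))| + ε) / (1 + l) := by
          rw [hyt, abs_div, abs_of_pos h1l]
          gcongr
          calc |(y (b - (n:ℤ)) - u (b - (n:ℤ))) -
                  ((y (b - (n:ℤ)) - y (b - ((n:ℤ) + 1))) - l * y (b - ((n:ℤ) + 1)) - s (b - ((n:ℤ) + 1)))|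
              ≤ |y (b - (n:ℤ)) - u (b - (n:ℤ))| +
                |(y (b - (n:ℤ)) - y (b - ((n:ℤ) + 1))) - l * y (b - ((n:ℤ) + 1)) - s (b - ((n:ℤ) + 1))| :=
                abs_sub _ _
            _ ≤ |y (b - (n:ℤ)) - u (b - (n:ℤ))| + ε := by linarith
        have hx : (1 + l) ^ ((b - ((n:ℤ)+1)) - b) = x / (1 + l) := by
          rw [(by ring : (b - ((n:ℤ)+1)) - b = -(n:ℤ) + -1), zpow_add₀ hne, hxdef, zpow_neg_one]
          ring
        have hid : ε / l * (1 - x / (1 + l)) = (ε / l * (1 - x) + ε) / (1 + l) := by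
          field_simp
          ring
        have hfin : (|y (b - (n:ℤ)) - u (b - (n:ℤ))| + ε) / (1 + l) ≤ ε / l * (1 - x / (1 + l)) := by
          rw [hid]
          gcongr
        push_cast
        rw [hx]
        exact habs.trans hfin
    intro t ht
    simp only [mem_Icc] at ht
    have h1 : |y t - u t| ≤ ε / l * (1 - (1 + l) ^ (t - b)) := by
      have hnt : ((b - t).toNat : ℤ) = b - t := Int.toNat_of_nonneg (by omega)
      have := key (b - t).toNat (by rw [hnt]; omega)
      rw [hnt] at this
      simpa using this
    refine ⟨h1, ?_⟩
    have hxpos : (0:ℝ) < (1 + l) ^ (t - b) := zpow_pos h1l _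
    have hle : (1 : ℝ) - (1 + l) ^ (t - b) ≤ 1 := by linarith
    calc ε / l * (1 - (1 + l) ^ (t - b)) ≤ ε / l * 1 :=
          mul_le_mul_of_nonneg_left hle (by positivity)
      _ = ε / l := mul_one _
end
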